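/- Let τ be a continuous distributive triangle function and γ a τ-decomposable measure on a σ-ring Σ continuous from below. For each (simple) γ-integrable non-negative function f, the set function ν^f_E := ∫_E f dγ is itself a τ-decomposable measure on Σ: ν^f_∅ = ε₀ and ν^f_{E∪F} = τ(ν^f_E, ν^f_F) for disjoint E, F ∈ Σ. -/

import Mathlib

open MeasureTheory Filter Set Topology

noncomputable section

/-- The distribution function of the Dirac measure at 0. -/
def eps0 : ℝ → ℝ := fun x => if 0 < x then 1 else 0

/-- εₐ : the distribution function of the Dirac measure at `a`. -/
def epsAt (a : ℝ) : ℝ → ℝ := fun x => if a < x then 1 else 0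

/-- Distance distribution function: non-decreasing, left-continuous,
vanishing on `(-∞,0]`, with values in `[0,1]` and `sup F = 1`. -/
def IsDDF (F : ℝ → ℝ) : Prop :=
  Monotone F ∧ (∀ x : ℝ, ContinuousWithinAt F (Set.Iio x) x) ∧
  (∀ x ≤ (0:ℝ), F x = 0) ∧ (∀ x, 0 ≤ F x ∧ F x ≤ 1) ∧
  Tendsto F atTop (nhds 1)

/-- Triangle function on Δ⁺: maps Δ⁺ × Δ⁺ into Δ⁺, symmetric, associative,
non-decreasing in each variable, with ε₀ as identity. -/
def IsTriangleFn (τ : (ℝ → ℝ) → (ℝ → ℝ) → (ℝ → ℝ)) : Prop :=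
  (∀ G H, IsDDF G → IsDDF H → IsDDF (τ G H)) ∧
  (∀ G H, τ G H = τ H G) ∧
  (∀ F G H, τ (τ F G) H = τ F (τ G H)) ∧
  (∀ F G H : ℝ → ℝ, F ≤ G → τ F H ≤ τ G H) ∧
  (∀ G, IsDDF G → τ G eps0 = G)

/-- Scalar multiplication `c ⊙ G` on Δ⁺. -/
def smulDDF (c : ℝ) (G : ℝ → ℝ) : ℝ → ℝ := fun x => if c = 0 then eps0 x else G (x / c)

/-- Distributive triangle function: `c ⊙ τ(G,H) = τ(c ⊙ G, c ⊙ H)`. -/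
def IsDistributive (τ : (ℝ → ℝ) → (ℝ → ℝ) → (ℝ → ℝ)) : Prop :=
  ∀ c : ℝ, 0 ≤ c → ∀ G H, smulDDF c (τ G H) = τ (smulDDF c G) (smulDDF c H)

/-- The Sibley (modified Lévy) metric on Δ⁺. -/
def dS (G H : ℝ → ℝ) : ℝ :=
  sInf {h : ℝ | 0 < h ∧ ∀ x ∈ Set.Icc (0:ℝ) (1/h),
    G (x - h) - h ≤ H x ∧ H x ≤ G (x + h) + h}

/-- Iterated τ-sum `⊕_{i} G i` over `Fin n` (empty sum is `ε₀`). -/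
def oplus (τ : (ℝ → ℝ) → (ℝ → ℝ) → (ℝ → ℝ)) : ∀ {n : ℕ}, (Fin n → (ℝ → ℝ)) → (ℝ → ℝ)
  | 0, _ => eps0
  | _ + 1, G => τ (G 0) (oplus τ (fun i => G i.succ))

/-- Partial sums `⊕_{k=0}^{n} G k` of a sequence. -/
def oplusPartial (τ : (ℝ → ℝ) → (ℝ → ℝ) → (ℝ → ℝ)) (G : ℕ → (ℝ → ℝ)) : ℕ → (ℝ → ℝ)
  | 0 => G 0
  | n + 1 => τ (oplusPartial τ G n) (G (n + 1))

/-- A simple non-negative function: finite values on pairwise disjoint measurable sets. -/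
structure SimpleFn (S : Set (Set Ω)) where
  n : ℕ
  c : Fin n → ℝ
  A : Fin n → Set Ω
  hc : ∀ i, 0 ≤ c i
  hA : ∀ i, A i ∈ S
  hdisj : Pairwise (Function.onFun Disjoint A)

def SimpleFn.toFun {Ω : Type*} {S : Set (Set Ω)} (f : SimpleFn S) : Ω → ℝ :=
  fun t => ∑ i, (f.A i).indicator (fun _ => f.c i) t

/-- The γ-integral of a simple function on `E`: `⊕ᵢ xᵢ ⊙ γ_{E∩Eᵢ}`. -/
def SimpleFn.integral {Ω : Type*} {S : Set (Set Ω)} (f : SimpleFn S)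
    (τ : (ℝ → ℝ) → (ℝ → ℝ) → (ℝ → ℝ)) (γ : Set Ω → (ℝ → ℝ)) (E : Set Ω) : ℝ → ℝ :=
  oplus τ (fun i => smulDDF (f.c i) (γ (E ∩ f.A i)))

/-- Left-continuous regularization `𝔊(x) = sup_{x' < x} G(x')`. -/
def lcReg (G : ℝ → ℝ) : ℝ → ℝ := fun x => sSup (G '' Set.Iio x)

/-- `𝔣 ∈ 𝒮_{f,E}` : simple functions below `f` on `E`. -/
def SimpleFn.belowOn {Ω : Type*} {S : Set (Set Ω)} (𝔣 : SimpleFn S)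
    (f : Ω → ENNReal) (E : Set Ω) : Prop :=
  ∀ t ∈ E, ENNReal.ofReal (𝔣.toFun t) ≤ f t

/-- `f` is γ-integrable on `E`: the integrals of simple functions below `f`
are bounded from below by some distance distribution function. -/
def Integrable' {Ω : Type*} {S : Set (Set Ω)}
    (τ : (ℝ → ℝ) → (ℝ → ℝ) → (ℝ → ℝ)) (γ : Set Ω → (ℝ → ℝ))
    (f : Ω → ENNReal) (E : Set Ω) : Prop :=
  ∃ H : ℝ → ℝ, IsDDF H ∧ ∀ 𝔣 : SimpleFn S, 𝔣.belowOn f E → H ≤ 𝔣.integral τ γ E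

/-- The γ-integral `∫_E f dγ` : the infimum in (Δ⁺, ≤) of integrals of simple
functions below `f` on `E` (left-continuous regularization of the pointwise infimum). -/
def probIntegral {Ω : Type*} (S : Set (Set Ω))
    (τ : (ℝ → ℝ) → (ℝ → ℝ) → (ℝ → ℝ)) (γ : Set Ω → (ℝ → ℝ))
    (f : Ω → ENNReal) (E : Set Ω) : ℝ → ℝ :=
  lcReg (fun x => sInf {y | ∃ 𝔣 : SimpleFn S, 𝔣.belowOn f E ∧ 𝔣.integral τ γ E x = y})

open Classical in
/-- The Lebesgue–Stieltjes measure of a monotone function (junk value otherwise). -/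
def lsMeasure (H : ℝ → ℝ) : Measure ℝ :=
  if h : Monotone H then h.stieltjesFunction.measure else 0

/-- Convolution `(G * H)(x) = ∫₀ˣ G(x−t) dH(t)` (Lebesgue–Stieltjes). -/
def conv (G H : ℝ → ℝ) : ℝ → ℝ := fun x =>
  if 0 < x then ∫ t in Set.Icc (0:ℝ) x, G (x - t) ∂(lsMeasure H) else 0

/-- `τ_{L,M}(G,H)(x) = sup_{L(u,v)=x} min(G(u),H(v))`. -/
def tauLM (L : ℝ → ℝ → ℝ) (G H : ℝ → ℝ) : ℝ → ℝ := fun x =>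
  sSup {t | ∃ u v : ℝ, 0 ≤ u ∧ 0 ≤ v ∧ L u v = x ∧ t = min (G u) (H v)}

/-- Pseudo-addition on `[0,∞)`: commutative, associative, jointly strictly
increasing, continuous, with neutral element 0. -/
def IsPseudoAddition (L : ℝ → ℝ → ℝ) : Prop :=
  (∀ u v, 0 ≤ u → 0 ≤ v → L u v = L v u) ∧
  (∀ u v w, 0 ≤ u → 0 ≤ v → 0 ≤ w → L (L u v) w = L u (L v w)) ∧
  (∀ u₁ u₂ v₁ v₂, 0 ≤ u₁ → 0 ≤ v₁ → u₁ < u₂ → v₁ < v₂ → L u₁ v₁ < L u₂ v₂) ∧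
  Continuous (fun p : ℝ × ℝ => L p.1 p.2) ∧
  (∀ u, 0 ≤ u → L 0 u = u ∧ L u 0 = u)

/-- γ is a τ-decomposable measure on the ring S. -/
def IsDecomposable {Ω : Type*} (S : Set (Set Ω))
    (τ : (ℝ → ℝ) → (ℝ → ℝ) → (ℝ → ℝ)) (γ : Set Ω → (ℝ → ℝ)) : Prop :=
  γ ∅ = eps0 ∧ ∀ E F : Set Ω, E ∈ S → F ∈ S → Disjoint E F → γ (E ∪ F) = τ (γ E) (γ F)

/-- γ is continuous from below: `γ_{E_n} → γ_E` weakly (in the Sibley metric)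
whenever `E_n ↗ E`. -/
def ContinuousFromBelow {Ω : Type*} (S : Set (Set Ω)) (γ : Set Ω → (ℝ → ℝ)) : Prop :=
  ∀ E : ℕ → Set Ω, (∀ n, E n ∈ S) → Monotone E → (⋃ n, E n) ∈ S →
    Tendsto (fun n => dS (γ (E n)) (γ (⋃ n, E n))) atTop (nhds 0)

/-- Sequential continuity of a triangle function w.r.t. the Sibley metric. -/
def IsContinuousTriangle (τ : (ℝ → ℝ) → (ℝ → ℝ) → (ℝ → ℝ)) : Prop :=
  ∀ (G H : ℝ → ℝ) (Gn Hn : ℕ → (ℝ → ℝ)), IsDDF G → IsDDF H → (∀ n, IsDDF (Gn n)) →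
    (∀ n, IsDDF (Hn n)) →
    Tendsto (fun n => dS (Gn n) G) atTop (nhds 0) →
    Tendsto (fun n => dS (Hn n) H) atTop (nhds 0) →
    Tendsto (fun n => dS (τ (Gn n) (Hn n)) (τ G H)) atTop (nhds 0)

/-!
The integral of a simple function is a finite `τ`-product of terms `cᵢ ⊙ γ(E ∩ Eᵢ)`, so `Δ⁺` is
best viewed as a commutative monoid under `τ`. Decomposability of `γ` and distributivity of `τ`
split every term over a disjoint union `E ∪ F`, which settles the case of simple functions.

For a general `f`, `ν_E` is the left-continuous regularization of the pointwise infimum of the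
integrals over `E` of simple functions below `f`. Restricting such a simple function on `E ∪ F` to
`E` and to `F` gives `τ(ν_E, ν_F) ≤ ν_{E∪F}` by monotonicity of `τ`. Conversely, pointwise maxima
make these integrals a downward directed family, so the infimum at finitely many grid points is
approached by a single integral; hence `ν_E` and `ν_F` are limits in the Sibley metric of integrals
`∫_E 𝔣ₙ` and `∫_F 𝔤ₙ`. Gluing `𝔣ₙ` on `E` to `𝔤ₙ` on `F` bounds `ν_{E∪F}` by
`τ(∫_E 𝔣ₙ, ∫_F 𝔤ₙ)`, and continuity of `τ` carries this bound to the limit.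
-/

section DistanceDistributionFunctions

variable {F : ℝ → ℝ}

lemma IsDDF.monotone (hF : IsDDF F) : Monotone F := hF.1

lemma IsDDF.continuousWithinAt_Iio (hF : IsDDF F) (x : ℝ) :
    ContinuousWithinAt F (Iio x) x := hF.2.1 x

lemma IsDDF.eq_zero_of_nonpos (hF : IsDDF F) {x : ℝ} (hx : x ≤ 0) : F x = 0 := hF.2.2.1 x hx

lemma IsDDF.nonneg (hF : IsDDF F) (x : ℝ) : 0 ≤ F x := (hF.2.2.2.1 x).1

lemma IsDDF.le_one (hF : IsDDF F) (x : ℝ) : F x ≤ 1 := (hF.2.2.2.1 x).2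

lemma IsDDF.tendsto_atTop (hF : IsDDF F) : Tendsto F atTop (𝓝 1) := hF.2.2.2.2

lemma eps0_of_pos {x : ℝ} (hx : 0 < x) : eps0 x = 1 := if_pos hx

lemma eps0_of_nonpos {x : ℝ} (hx : x ≤ 0) : eps0 x = 0 := if_neg hx.not_gt

lemma isDDF_eps0 : IsDDF eps0 := by
  refine ⟨fun x y hxy => ?_, fun x => ?_, fun x => eps0_of_nonpos, fun x => ?_, ?_⟩
  · unfold eps0
    split_ifs with hx hy <;> first | exact absurd (hx.trans_le hxy) hy | norm_num
  · rcases le_or_gt x 0 with hx | hx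
    · exact continuousWithinAt_const.congr
        (fun y hy => eps0_of_nonpos ((le_of_lt hy).trans hx)) (eps0_of_nonpos hx)
    · exact (continuousAt_const.congr (eventually_gt_nhds hx |>.mono
        fun y hy => (eps0_of_pos hy).symm)).continuousWithinAt
  · unfold eps0
    split_ifs <;> norm_num
  · exact tendsto_const_nhds.congr' <| (eventually_gt_atTop 0).mono
      fun y hy => (eps0_of_pos hy).symm

lemma IsDDF.le_eps0 (hF : IsDDF F) : F ≤ eps0 := fun x => by
  rcases le_or_gt x 0 with hx | hx
  · rw [hF.eq_zero_of_nonpos hx, eps0_of_nonpos hx]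
  · rw [eps0_of_pos hx]
    exact hF.le_one x

lemma smulDDF_zero (G : ℝ → ℝ) : smulDDF 0 G = eps0 := by
  ext x
  simp [smulDDF]

lemma smulDDF_of_pos {c : ℝ} (hc : 0 < c) (G : ℝ → ℝ) : smulDDF c G = fun x => G (x / c) := by
  ext x
  simp [smulDDF, hc.ne']

lemma smulDDF_eps0 {c : ℝ} (hc : 0 ≤ c) : smulDDF c eps0 = eps0 := by
  rcases hc.eq_or_lt with rfl | hc
  · exact smulDDF_zero _
  · ext x
    simp only [smulDDF_of_pos hc, eps0, div_pos_iff_of_pos_right hc]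

lemma IsDDF.smul (hF : IsDDF F) {c : ℝ} (hc : 0 ≤ c) : IsDDF (smulDDF c F) := by
  rcases hc.eq_or_lt with rfl | hc
  · rw [smulDDF_zero]
    exact isDDF_eps0
  rw [smulDDF_of_pos hc]
  refine ⟨fun x y hxy => hF.monotone (by gcongr), fun x => ?_,
    fun x hx => hF.eq_zero_of_nonpos (div_nonpos_of_nonpos_of_nonneg hx hc.le),
    fun x => ⟨hF.nonneg _, hF.le_one _⟩, hF.tendsto_atTop.comp (tendsto_id.atTop_div_const hc)⟩
  exact (hF.continuousWithinAt_Iio (x / c)).comp (f := fun y => y / c)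
    (continuous_id.div_const c).continuousWithinAt fun y hy => div_lt_div_of_pos_right hy hc

lemma IsDDF.smulDDF_anti (hF : IsDDF F) {a b : ℝ} (ha : 0 ≤ a) (hab : a ≤ b) :
    smulDDF b F ≤ smulDDF a F := by
  rcases ha.eq_or_lt with rfl | ha
  · rw [smulDDF_zero]
    exact (hF.smul hab).le_eps0
  intro x
  simp only [smulDDF_of_pos ha, smulDDF_of_pos (ha.trans_le hab)]
  rcases le_or_gt x 0 with hx | hx
  · rw [hF.eq_zero_of_nonpos (div_nonpos_of_nonpos_of_nonneg hx (ha.le.trans hab)),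
      hF.eq_zero_of_nonpos (div_nonpos_of_nonpos_of_nonneg hx ha.le)]
  · exact hF.monotone (div_le_div_of_nonneg_left hx.le ha hab)

end DistanceDistributionFunctions

section TriangleMonoid

variable {τ : (ℝ → ℝ) → (ℝ → ℝ) → (ℝ → ℝ)}

lemma IsTriangleFn.isDDF (hτ : IsTriangleFn τ) {G H : ℝ → ℝ} (hG : IsDDF G) (hH : IsDDF H) :
    IsDDF (τ G H) := hτ.1 G H hG hH

lemma IsTriangleFn.mono (hτ : IsTriangleFn τ) {F G F' G' : ℝ → ℝ} (h : F ≤ G) (h' : F' ≤ G') :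
    τ F F' ≤ τ G G' :=
  calc τ F F' ≤ τ G F' := hτ.2.2.2.1 _ _ _ h
    _ = τ F' G := hτ.2.1 _ _
    _ ≤ τ G' G := hτ.2.2.2.1 _ _ _ h'
    _ = τ G G' := hτ.2.1 _ _

@[ext]
structure DistFn (τ : (ℝ → ℝ) → (ℝ → ℝ) → (ℝ → ℝ)) (hτ : IsTriangleFn τ) where
  val : ℝ → ℝ
  isDDF : IsDDF val

namespace DistFn

variable {hτ : IsTriangleFn τ}

instance : CommMonoid (DistFn τ hτ) where
  mul F G := ⟨τ F.val G.val, hτ.isDDF F.isDDF G.isDDF⟩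
  one := ⟨eps0, isDDF_eps0⟩
  mul_assoc _ _ _ := DistFn.ext (hτ.2.2.1 _ _ _)
  mul_comm _ _ := DistFn.ext (hτ.2.1 _ _)
  mul_one F := DistFn.ext (hτ.2.2.2.2 _ F.isDDF)
  one_mul F := DistFn.ext ((hτ.2.1 _ _).trans (hτ.2.2.2.2 _ F.isDDF))

@[simp]
lemma val_mul (F G : DistFn τ hτ) : (F * G).val = τ F.val G.val := rfl

@[simp]
lemma val_one : (1 : DistFn τ hτ).val = eps0 := rfl

instance : PartialOrder (DistFn τ hτ) := PartialOrder.lift val fun _ _ => DistFn.ext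

lemma le_def {F G : DistFn τ hτ} : F ≤ G ↔ F.val ≤ G.val := Iff.rfl

instance : MulLeftMono (DistFn τ hτ) :=
  ⟨fun _ _ _ h => le_def.2 (hτ.mono le_rfl (le_def.1 h))⟩

end DistFn

lemma oplus_eq_val_prod {hτ : IsTriangleFn τ} :
    ∀ {n : ℕ} (G : Fin n → DistFn τ hτ), oplus τ (fun i => (G i).val) = (∏ i, G i).val
  | 0, _ => rfl
  | _ + 1, G => by
    rw [Fin.prod_univ_succ, DistFn.val_mul, ← oplus_eq_val_prod]
    rfl

def DistFn.smulHom {hτ : IsTriangleFn τ} (hd : IsDistributive τ) {c : ℝ} (hc : 0 ≤ c) :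
    DistFn τ hτ →* DistFn τ hτ where
  toFun F := ⟨smulDDF c F.val, F.isDDF.smul hc⟩
  map_one' := DistFn.ext (smulDDF_eps0 hc)
  map_mul' F G := DistFn.ext (hd c hc F.val G.val)

end TriangleMonoid

lemma isSetRing_of_iUnion_mem {Ω : Type*} {S : Set (Set Ω)} (hempty : (∅ : Set Ω) ∈ S)
    (hdiff : ∀ A B : Set Ω, A ∈ S → B ∈ S → A \ B ∈ S)
    (hiUnion : ∀ g : ℕ → Set Ω, (∀ n, g n ∈ S) → (⋃ n, g n) ∈ S) : IsSetRing S where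
  empty_mem := hempty
  union_mem A B hA hB := by
    convert hiUnion (fun n => if n = 0 then A else B) (fun n => by split_ifs <;> assumption)
    ext t
    simp only [mem_union, mem_iUnion]
    refine ⟨fun h => h.elim (fun h => ⟨0, by simpa⟩) (fun h => ⟨1, by simpa⟩), fun ⟨n, hn⟩ => ?_⟩
    split_ifs at hn <;> simp [hn]
  sdiff_mem := hdiff

lemma MeasureTheory.IsSetRing.iUnion_mem {Ω ι : Type*} [Finite ι] {S : Set (Set Ω)}
    (hS : IsSetRing S) {s : ι → Set Ω} (hs : ∀ i, s i ∈ S) : (⋃ i, s i) ∈ S := by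
  have := Fintype.ofFinite ι
  simpa using hS.biUnion_mem Finset.univ fun i _ => hs i

section DecomposableMeasure

variable {Ω : Type*} {S : Set (Set Ω)} {τ : (ℝ → ℝ) → (ℝ → ℝ) → (ℝ → ℝ)}
  {γ : Set Ω → (ℝ → ℝ)}

def smulTerm (hτ : IsTriangleFn τ) (hmem : ∀ E ∈ S, IsDDF (γ E)) {c : ℝ} (hc : 0 ≤ c)
    {B : Set Ω} (hB : B ∈ S) : DistFn τ hτ :=
  ⟨smulDDF c (γ B), (hmem B hB).smul hc⟩

variable {hτ : IsTriangleFn τ} {hmem : ∀ E ∈ S, IsDDF (γ E)}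

@[simp]
lemma val_smulTerm {c : ℝ} (hc : 0 ≤ c) {B : Set Ω} (hB : B ∈ S) :
    (smulTerm hτ hmem hc hB).val = smulDDF c (γ B) := rfl

lemma smulTerm_zero {B : Set Ω} (hB : B ∈ S) : smulTerm hτ hmem le_rfl hB = 1 :=
  DistFn.ext (smulDDF_zero _)

lemma smulTerm_empty (hγ : IsDecomposable S τ γ) {c : ℝ} (hc : 0 ≤ c) {B : Set Ω}
    (hB : B ∈ S) (hB0 : B = ∅) : smulTerm hτ hmem hc hB = 1 := by
  ext1
  simp [hB0, hγ.1, smulDDF_eps0 hc]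

lemma smulTerm_anti {a b : ℝ} (ha : 0 ≤ a) (hab : a ≤ b) {B : Set Ω} (hB : B ∈ S) :
    smulTerm hτ hmem (ha.trans hab) hB ≤ smulTerm hτ hmem ha hB :=
  (hmem B hB).smulDDF_anti ha hab

lemma smulTerm_congr {c c' : ℝ} (hc : 0 ≤ c) (hc' : 0 ≤ c') {B B' : Set Ω} (hB : B ∈ S)
    (hB' : B' ∈ S) (h : c = c') (h' : B = B') :
    smulTerm hτ hmem hc hB = smulTerm hτ hmem hc' hB' := by
  subst h h'
  rfl

lemma IsDecomposable.smulTerm_iUnion (hS : IsSetRing S) (hγ : IsDecomposable S τ γ)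
    (hd : IsDistributive τ) {ι : Type*} [Fintype ι] {C : ι → Set Ω} (hC : ∀ i, C i ∈ S)
    (hdisj : Pairwise (Function.onFun Disjoint C)) {c : ℝ} (hc : 0 ≤ c) :
    smulTerm hτ hmem hc (hS.iUnion_mem hC) = ∏ i, smulTerm hτ hmem hc (hC i) := by
  classical
  have hfin : ∀ s : Finset ι,
      γ (⋃ i ∈ s, C i) = (∏ i ∈ s, (⟨γ (C i), hmem _ (hC i)⟩ : DistFn τ hτ)).val := by
    intro s
    induction s using Finset.induction_on with
    | empty => simp [hγ.1]
    | insert a s ha ih =>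
      have hdisj' : Disjoint (C a) (⋃ i ∈ s, C i) :=
        disjoint_iUnion₂_right.2 fun i hi => hdisj (ne_of_mem_of_not_mem hi ha).symm
      rw [Finset.set_biUnion_insert, hγ.2 _ _ (hC a) (hS.biUnion_mem s fun i _ => hC i) hdisj',
        Finset.prod_insert ha, DistFn.val_mul, ih]
  ext1
  rw [val_smulTerm, (by simpa using hfin Finset.univ : γ (⋃ i, C i) = _)]
  exact congrArg DistFn.val (map_prod (DistFn.smulHom hd hc) _ _)

lemma IsDecomposable.smulTerm_union (hS : IsSetRing S) (hγ : IsDecomposable S τ γ)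
    (hd : IsDistributive τ) {c : ℝ} (hc : 0 ≤ c) {B C : Set Ω} (hB : B ∈ S) (hC : C ∈ S)
    (hBC : Disjoint B C) :
    smulTerm hτ hmem hc (hS.union_mem hB hC) =
      smulTerm hτ hmem hc hB * smulTerm hτ hmem hc hC := by
  ext1
  simp [hγ.2 B C hB hC hBC, hd c hc]

lemma IsDecomposable.prod_smulTerm_refine_le (hS : IsSetRing S) (hγ : IsDecomposable S τ γ)
    (hd : IsDistributive τ) {ι κ : Type*} [Fintype ι] [Fintype κ] {X : ι → Set Ω}
    {Z : ι → κ → Set Ω} (hZ : ∀ i j, Z i j ∈ S) (hZX : ∀ i, ⋃ j, Z i j = X i)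
    (hZdisj : ∀ i, Pairwise (Function.onFun Disjoint (Z i))) {a : ι → ℝ} {m : ι → κ → ℝ}
    (ha : ∀ i, 0 ≤ a i) (ham : ∀ i j, a i ≤ m i j) {E : Set Ω} (hE : E ∈ S)
    (hX : ∀ i, X i ∈ S) :
    ∏ i, ∏ j, smulTerm hτ hmem ((ha i).trans (ham i j)) (hS.inter_mem hE (hZ i j)) ≤
      ∏ i, smulTerm hτ hmem (ha i) (hS.inter_mem hE (hX i)) := by
  refine Finset.prod_le_prod' fun i _ => ?_
  have hEZ : ∀ j, E ∩ Z i j ∈ S := fun j => hS.inter_mem hE (hZ i j)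
  calc ∏ j, smulTerm hτ hmem ((ha i).trans (ham i j)) (hEZ j)
      ≤ ∏ j, smulTerm hτ hmem (ha i) (hEZ j) :=
        Finset.prod_le_prod' fun j _ => smulTerm_anti (ha i) (ham i j) (hEZ j)
    _ = smulTerm hτ hmem (ha i) (hS.iUnion_mem hEZ) :=
        (hγ.smulTerm_iUnion hS hd hEZ
          (fun j k hjk => ((hZdisj i hjk).mono inter_subset_right inter_subset_right)) _).symm
    _ = smulTerm hτ hmem (ha i) (hS.inter_mem hE (hX i)) :=
        smulTerm_congr _ _ _ _ rfl (by rw [← inter_iUnion, hZX])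

end DecomposableMeasure

namespace SimpleFn

variable {Ω : Type*} {S : Set (Set Ω)}

def ofFintype {ι : Type*} [Fintype ι] (c : ι → ℝ) (A : ι → Set Ω) (hc : ∀ i, 0 ≤ c i)
    (hA : ∀ i, A i ∈ S) (hdisj : Pairwise (Function.onFun Disjoint A)) : SimpleFn S where
  n := Fintype.card ι
  c := c ∘ (Fintype.equivFin ι).symm
  A := A ∘ (Fintype.equivFin ι).symm
  hc _ := hc _
  hA _ := hA _
  hdisj _ _ hkl := hdisj ((Fintype.equivFin ι).symm.injective.ne hkl)

instance : Zero (SimpleFn S) where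
  zero :=
    { n := 0
      c := Fin.elim0
      A := Fin.elim0
      hc := fun i => i.elim0
      hA := fun i => i.elim0
      hdisj := fun i => i.elim0 }

def carrier (f : SimpleFn S) : Set Ω := ⋃ i, f.A i

lemma toFun_of_mem (f : SimpleFn S) {t : Ω} {i : Fin f.n} (h : t ∈ f.A i) :
    f.toFun t = f.c i := by
  rw [toFun, Finset.sum_eq_single_of_mem i (Finset.mem_univ i), indicator_of_mem h]
  exact fun j _ hji => indicator_of_notMem (fun hj => (f.hdisj hji).ne_of_mem hj h rfl) _

lemma toFun_of_forall_notMem (f : SimpleFn S) {t : Ω} (h : ∀ i, t ∉ f.A i) :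
    f.toFun t = 0 :=
  Finset.sum_eq_zero fun i _ => indicator_of_notMem (h i) _

lemma belowOn_iff (f : SimpleFn S) (φ : Ω → ENNReal) (E : Set Ω) :
    f.belowOn φ E ↔ ∀ i, ∀ t ∈ E, t ∈ f.A i → ENNReal.ofReal (f.c i) ≤ φ t := by
  refine ⟨fun h i t ht hti => f.toFun_of_mem hti ▸ h t ht, fun h t ht => ?_⟩
  by_cases hex : ∃ i, t ∈ f.A i
  · obtain ⟨i, hi⟩ := hex
    rw [f.toFun_of_mem hi]
    exact h i t ht hi
  · rw [f.toFun_of_forall_notMem (not_exists.1 hex), ENNReal.ofReal_zero]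
    exact bot_le

lemma belowOn_ofFintype_iff {ι : Type*} [Fintype ι] {c : ι → ℝ} {A : ι → Set Ω}
    {hc : ∀ i, 0 ≤ c i} {hA : ∀ i, A i ∈ S} {hdisj : Pairwise (Function.onFun Disjoint A)}
    (φ : Ω → ENNReal) (E : Set Ω) :
    (ofFintype c A hc hA hdisj).belowOn φ E ↔
      ∀ i, ∀ t ∈ E, t ∈ A i → ENNReal.ofReal (c i) ≤ φ t := by
  rw [belowOn_iff]
  exact ((Fintype.equivFin ι).forall_congr_left
    (p := fun i => ∀ t ∈ E, t ∈ A i → ENNReal.ofReal (c i) ≤ φ t)).symm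

lemma zero_belowOn (φ : Ω → ENNReal) (E : Set Ω) : (0 : SimpleFn S).belowOn φ E :=
  (belowOn_iff _ φ E).2 fun i => i.elim0

variable {τ : (ℝ → ℝ) → (ℝ → ℝ) → (ℝ → ℝ)} {γ : Set Ω → (ℝ → ℝ)}

lemma integral_eq_val_prod (hτ : IsTriangleFn τ) (hmem : ∀ E ∈ S, IsDDF (γ E))
    (hS : IsSetRing S) (f : SimpleFn S) {E : Set Ω} (hE : E ∈ S) :
    f.integral τ γ E = (∏ i, smulTerm hτ hmem (f.hc i) (hS.inter_mem hE (f.hA i))).val :=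
  oplus_eq_val_prod fun i => smulTerm hτ hmem (f.hc i) (hS.inter_mem hE (f.hA i))

lemma integral_ofFintype (hτ : IsTriangleFn τ) (hmem : ∀ E ∈ S, IsDDF (γ E))
    (hS : IsSetRing S) {ι : Type*} [Fintype ι] {c : ι → ℝ} {A : ι → Set Ω} (hc : ∀ i, 0 ≤ c i)
    (hA : ∀ i, A i ∈ S)
    (hdisj : Pairwise (Function.onFun Disjoint A)) {E : Set Ω} (hE : E ∈ S) :
    (ofFintype c A hc hA hdisj).integral τ γ E =
      (∏ i, smulTerm hτ hmem (hc i) (hS.inter_mem hE (hA i))).val := by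
  rw [integral_eq_val_prod hτ hmem hS _ hE]
  exact congrArg _ (Equiv.prod_comp (Fintype.equivFin ι).symm
    fun i => smulTerm hτ hmem (hc i) (hS.inter_mem hE (hA i)))

lemma integral_isDDF (hτ : IsTriangleFn τ) (hmem : ∀ E ∈ S, IsDDF (γ E)) (hS : IsSetRing S)
    (f : SimpleFn S) {E : Set Ω} (hE : E ∈ S) : IsDDF (f.integral τ γ E) := by
  rw [f.integral_eq_val_prod hτ hmem hS hE]
  exact DistFn.isDDF _

lemma integral_empty (hτ : IsTriangleFn τ) (hmem : ∀ E ∈ S, IsDDF (γ E)) (hS : IsSetRing S)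
    (hγ : IsDecomposable S τ γ) (f : SimpleFn S) : f.integral τ γ ∅ = eps0 := by
  rw [f.integral_eq_val_prod hτ hmem hS hS.empty_mem,
    Finset.prod_eq_one fun i _ => smulTerm_empty hγ _ _ (empty_inter _)]
  rfl

lemma integral_union (hτ : IsTriangleFn τ) (hmem : ∀ E ∈ S, IsDDF (γ E)) (hS : IsSetRing S)
    (hγ : IsDecomposable S τ γ) (hd : IsDistributive τ) (f : SimpleFn S) {E F : Set Ω}
    (hE : E ∈ S) (hF : F ∈ S) (hEF : Disjoint E F) :
    f.integral τ γ (E ∪ F) = τ (f.integral τ γ E) (f.integral τ γ F) := by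
  simp only [f.integral_eq_val_prod hτ hmem hS (hS.union_mem hE hF),
    f.integral_eq_val_prod hτ hmem hS hE, f.integral_eq_val_prod hτ hmem hS hF, ← DistFn.val_mul,
    ← Finset.prod_mul_distrib]
  congr 1
  refine Finset.prod_congr rfl fun i _ => ?_
  rw [← hγ.smulTerm_union hS hd (f.hc i) _ _ (hEF.mono inter_subset_left inter_subset_left)]
  exact smulTerm_congr _ _ _ _ rfl (union_inter_distrib_right _ _ _)

section Glue

/-- The simple function equal to `f` on `E` and to `g` on `F`. -/
def glue (hS : IsSetRing S) (f g : SimpleFn S) {E F : Set Ω} (hE : E ∈ S) (hF : F ∈ S)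
    (hEF : Disjoint E F) : SimpleFn S :=
  ofFintype (Sum.elim f.c g.c) (Sum.elim (fun i => f.A i ∩ E) (fun j => g.A j ∩ F))
    (by rintro (i | j); exacts [f.hc i, g.hc j])
    (by rintro (i | j); exacts [hS.inter_mem (f.hA i) hE, hS.inter_mem (g.hA j) hF])
    (by
      rintro (i | j) (i' | j') h
      · exact (f.hdisj (ne_of_apply_ne Sum.inl h)).mono inter_subset_left inter_subset_left
      · exact hEF.mono inter_subset_right inter_subset_right
      · exact hEF.symm.mono inter_subset_right inter_subset_right
      · exact (g.hdisj (ne_of_apply_ne Sum.inr h)).mono inter_subset_left inter_subset_left)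

variable (hS : IsSetRing S) {f g : SimpleFn S} {E F : Set Ω} (hE : E ∈ S) (hF : F ∈ S)
  (hEF : Disjoint E F)

lemma belowOn_glue {φ : Ω → ENNReal} (hf : f.belowOn φ E) (hg : g.belowOn φ F) :
    (glue hS f g hE hF hEF).belowOn φ (E ∪ F) := by
  refine (belowOn_ofFintype_iff _ _).2 ?_
  rintro (i | j) t - ⟨hti, ht⟩
  exacts [(f.belowOn_iff φ E).1 hf i t ht hti, (g.belowOn_iff φ F).1 hg j t ht hti]

lemma integral_glue_left (hτ : IsTriangleFn τ) (hmem : ∀ E ∈ S, IsDDF (γ E))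
    (hγ : IsDecomposable S τ γ) :
    (glue hS f g hE hF hEF).integral τ γ E = f.integral τ γ E := by
  refine (integral_ofFintype hτ hmem hS _ _ _ hE).trans ?_
  rw [Fintype.prod_sum_type, Finset.prod_eq_one (s := (Finset.univ : Finset (Fin g.n)))
    (fun j _ => smulTerm_empty hγ _ _ ?_), mul_one, f.integral_eq_val_prod hτ hmem hS hE]
  · exact congrArg _ (Finset.prod_congr rfl fun i _ =>
      smulTerm_congr _ _ _ _ rfl
        (by rw [Sum.elim_inl, inter_comm (f.A i), ← inter_assoc, inter_self]))
  · exact (hEF.mono_right inter_subset_right).inter_eq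

lemma integral_glue_right (hτ : IsTriangleFn τ) (hmem : ∀ E ∈ S, IsDDF (γ E))
    (hγ : IsDecomposable S τ γ) :
    (glue hS f g hE hF hEF).integral τ γ F = g.integral τ γ F := by
  refine (integral_ofFintype hτ hmem hS _ _ _ hF).trans ?_
  rw [Fintype.prod_sum_type, Finset.prod_eq_one (s := (Finset.univ : Finset (Fin f.n)))
    (fun i _ => smulTerm_empty hγ _ _ ?_), one_mul, g.integral_eq_val_prod hτ hmem hS hF]
  · exact congrArg _ (Finset.prod_congr rfl fun j _ =>
      smulTerm_congr _ _ _ _ rfl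
        (by rw [Sum.elim_inr, inter_comm (g.A j), ← inter_assoc, inter_self]))
  · exact (hEF.symm.mono_right inter_subset_right).inter_eq

end Glue

section Sup

def extCoeff (f : SimpleFn S) (o : Option (Fin f.n)) : ℝ := o.elim 0 f.c

def extPieces (f : SimpleFn S) (B : Set Ω) (o : Option (Fin f.n)) : Set Ω :=
  o.elim (B \ f.carrier) f.A

lemma extCoeff_nonneg (f : SimpleFn S) : ∀ o, 0 ≤ f.extCoeff o
  | none => le_rfl
  | some i => f.hc i

lemma extPieces_mem (hS : IsSetRing S) (f : SimpleFn S) {B : Set Ω} (hB : B ∈ S) :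
    ∀ o, f.extPieces B o ∈ S
  | none => hS.sdiff_mem hB (hS.iUnion_mem f.hA)
  | some i => f.hA i

lemma extPieces_pairwise (f : SimpleFn S) (B : Set Ω) :
    Pairwise (Function.onFun Disjoint (f.extPieces B)) := by
  rintro (_ | i) (_ | j) h
  · exact absurd rfl h
  · exact disjoint_sdiff_left.mono_right (subset_iUnion f.A j)
  · exact disjoint_sdiff_right.mono_left (subset_iUnion f.A i)
  · exact f.hdisj (ne_of_apply_ne some h)

lemma iUnion_extPieces (f : SimpleFn S) (B : Set Ω) :
    ⋃ o, f.extPieces B o = f.carrier ∪ B := by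
  rw [iUnion_option]
  exact sdiff_union_self.trans (union_comm _ _)

lemma iUnion_inter_extPieces (f g : SimpleFn S) (o : Option (Fin f.n)) :
    ⋃ p, f.extPieces g.carrier o ∩ g.extPieces f.carrier p = f.extPieces g.carrier o := by
  rw [← inter_iUnion, iUnion_extPieces, inter_eq_left, union_comm, ← iUnion_extPieces]
  exact subset_iUnion (f.extPieces g.carrier) o

lemma ofReal_extCoeff_le (f : SimpleFn S) {φ : Ω → ENNReal} {E B : Set Ω} (hf : f.belowOn φ E)
    {t : Ω} (ht : t ∈ E) : ∀ {o}, t ∈ f.extPieces B o → ENNReal.ofReal (f.extCoeff o) ≤ φ t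
  | none, _ => by simp [extCoeff]
  | some i, h => (f.belowOn_iff φ E).1 hf i t ht h

lemma prod_smulTerm_extPieces (hτ : IsTriangleFn τ) (hmem : ∀ E ∈ S, IsDDF (γ E))
    (hS : IsSetRing S) (f : SimpleFn S) {B E : Set Ω} (hB : B ∈ S) (hE : E ∈ S) :
    ∏ o, smulTerm hτ hmem (f.extCoeff_nonneg o) (hS.inter_mem hE (f.extPieces_mem hS hB o)) =
      ∏ i, smulTerm hτ hmem (f.hc i) (hS.inter_mem hE (f.hA i)) := by
  rw [Fintype.prod_option]
  exact (congrArg (· * _) (smulTerm_zero _)).trans (one_mul _)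

/-- The pointwise maximum of `f` and `g`, built on the common refinement of their partitions after
both are extended by a zero-valued piece to the common carrier. -/
def sup (hS : IsSetRing S) (f g : SimpleFn S) : SimpleFn S :=
  ofFintype (fun p : Option (Fin f.n) × Option (Fin g.n) => max (f.extCoeff p.1) (g.extCoeff p.2))
    (fun p => f.extPieces g.carrier p.1 ∩ g.extPieces f.carrier p.2)
    (fun p => le_max_of_le_left (f.extCoeff_nonneg p.1))
    (fun p => hS.inter_mem (f.extPieces_mem hS (hS.iUnion_mem g.hA) p.1)
      (g.extPieces_mem hS (hS.iUnion_mem f.hA) p.2))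
    (by
      rintro ⟨o, p⟩ ⟨o', p'⟩ h
      by_cases ho : o = o'
      · subst ho
        exact (g.extPieces_pairwise _ fun hp => h (Prod.ext rfl hp)).mono
          inter_subset_right inter_subset_right
      · exact (f.extPieces_pairwise _ ho).mono inter_subset_left inter_subset_left)

variable (hS : IsSetRing S) {f g : SimpleFn S}

lemma belowOn_sup {φ : Ω → ENNReal} {E : Set Ω} (hf : f.belowOn φ E) (hg : g.belowOn φ E) :
    (sup hS f g).belowOn φ E := by
  refine (belowOn_ofFintype_iff _ _).2 ?_
  rintro ⟨o, p⟩ t ht ⟨hto, htp⟩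
  rw [ENNReal.ofReal_max]
  exact max_le (f.ofReal_extCoeff_le hf ht hto) (g.ofReal_extCoeff_le hg ht htp)

lemma integral_sup_le_left (hτ : IsTriangleFn τ) (hmem : ∀ E ∈ S, IsDDF (γ E))
    (hγ : IsDecomposable S τ γ) (hd : IsDistributive τ) {E : Set Ω} (hE : E ∈ S) :
    (sup hS f g).integral τ γ E ≤ f.integral τ γ E := by
  refine (integral_ofFintype hτ hmem hS _ _ _ hE).trans_le ?_
  rw [f.integral_eq_val_prod hτ hmem hS hE,
    ← f.prod_smulTerm_extPieces hτ hmem hS (hS.iUnion_mem g.hA) hE, Fintype.prod_prod_type]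
  exact DistFn.le_def.1 (hγ.prod_smulTerm_refine_le hS hd
    (Z := fun o p => f.extPieces g.carrier o ∩ g.extPieces f.carrier p)
    (fun o p => hS.inter_mem (f.extPieces_mem hS (hS.iUnion_mem g.hA) o)
      (g.extPieces_mem hS (hS.iUnion_mem f.hA) p))
    (f.iUnion_inter_extPieces g)
    (fun o p p' h => (g.extPieces_pairwise _ h).mono inter_subset_right inter_subset_right)
    f.extCoeff_nonneg (fun o p => le_max_left _ _) hE
    (f.extPieces_mem hS (hS.iUnion_mem g.hA)))

lemma integral_sup_le_right (hτ : IsTriangleFn τ) (hmem : ∀ E ∈ S, IsDDF (γ E))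
    (hγ : IsDecomposable S τ γ) (hd : IsDistributive τ) {E : Set Ω} (hE : E ∈ S) :
    (sup hS f g).integral τ γ E ≤ g.integral τ γ E := by
  refine (integral_ofFintype hτ hmem hS _ _ _ hE).trans_le ?_
  rw [g.integral_eq_val_prod hτ hmem hS hE,
    ← g.prod_smulTerm_extPieces hτ hmem hS (hS.iUnion_mem f.hA) hE, Fintype.prod_prod_type_right]
  exact DistFn.le_def.1 (hγ.prod_smulTerm_refine_le hS hd
    (X := g.extPieces f.carrier) (Z := fun p o => f.extPieces g.carrier o ∩ g.extPieces f.carrier p)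
    (fun p o => hS.inter_mem (f.extPieces_mem hS (hS.iUnion_mem g.hA) o)
      (g.extPieces_mem hS (hS.iUnion_mem f.hA) p))
    (fun p => by simpa only [inter_comm] using g.iUnion_inter_extPieces f p)
    (fun p o o' h => (f.extPieces_pairwise _ h).mono inter_subset_left inter_subset_left)
    g.extCoeff_nonneg (fun p o => le_max_right _ _) hE
    (g.extPieces_mem hS (hS.iUnion_mem f.hA)))

end Sup

end SimpleFn

section LeftContinuousRegularization

variable {g G H : ℝ → ℝ}

lemma lcReg_le {x b : ℝ} (h : ∀ y < x, g y ≤ b) : lcReg g x ≤ b :=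
  csSup_le (nonempty_Iio.image g) (forall_mem_image.2 h)

lemma le_lcReg (hg : ∀ x, g x ≤ 1) {x y : ℝ} (hyx : y < x) : g y ≤ lcReg g x :=
  le_csSup ⟨1, forall_mem_image.2 fun z _ => hg z⟩ (mem_image_of_mem g hyx)

lemma lcReg_le_one (hg : ∀ x, g x ≤ 1) (x : ℝ) : lcReg g x ≤ 1 :=
  lcReg_le fun y _ => hg y

lemma lcReg_mono (hg : ∀ x, g x ≤ 1) : Monotone (lcReg g) := fun _ _ hxx' =>
  lcReg_le fun _ hy => le_lcReg hg (hy.trans_le hxx')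

lemma lcReg_le_lcReg (hGH : G ≤ H) (hH : ∀ x, H x ≤ 1) : lcReg G ≤ lcReg H := fun _ =>
  lcReg_le fun y hy => (hGH y).trans (le_lcReg hH hy)

lemma IsDDF.lcReg_eq {F : ℝ → ℝ} (hF : IsDDF F) : lcReg F = F := funext fun x =>
  tendsto_nhds_unique (hF.monotone.tendsto_nhdsLT x) (hF.continuousWithinAt_Iio x)

lemma isDDF_lcReg (hg0 : ∀ x, 0 ≤ g x) (hg1 : ∀ x, g x ≤ 1) (hg : ∀ x ≤ 0, g x = 0)
    (hlim : Tendsto g atTop (𝓝 1)) : IsDDF (lcReg g) := by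
  have hmono := lcReg_mono hg1
  have hshift : ∀ x, g (x - 1) ≤ lcReg g x := fun x => le_lcReg hg1 (sub_one_lt x)
  refine ⟨hmono, fun x => ?_, fun x hx => ?_, fun x => ⟨(hg0 _).trans (hshift x),
    lcReg_le_one hg1 x⟩, ?_⟩
  · have hsup : sSup (lcReg g '' Iio x) = lcReg g x := by
      refine le_antisymm (csSup_le (nonempty_Iio.image _) (forall_mem_image.2 fun y hy =>
        hmono hy.le)) (lcReg_le fun y hy => ?_)
      obtain ⟨z, hyz, hzx⟩ := exists_between hy
      exact (le_lcReg hg1 hyz).trans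
        (le_csSup ⟨1, forall_mem_image.2 fun z _ => lcReg_le_one hg1 z⟩ (mem_image_of_mem _ hzx))
    have := hmono.tendsto_nhdsLT x
    rwa [hsup] at this
  · exact le_antisymm (lcReg_le fun y hy => (hg y (hy.le.trans hx)).le)
      ((hg _ (by linarith)).symm.le.trans (hshift x))
  · exact tendsto_of_tendsto_of_tendsto_of_le_of_le
      (hlim.comp (tendsto_atTop_add_const_right atTop (-1) tendsto_id)) tendsto_const_nhds
      hshift (lcReg_le_one hg1)

end LeftContinuousRegularization

section ProbIntegral

variable {Ω : Type*} {S : Set (Set Ω)} {τ : (ℝ → ℝ) → (ℝ → ℝ) → (ℝ → ℝ)}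
  {γ : Set Ω → (ℝ → ℝ)} {φ : Ω → ENNReal} {E : Set Ω}

def infIntegral (S : Set (Set Ω)) (τ : (ℝ → ℝ) → (ℝ → ℝ) → (ℝ → ℝ)) (γ : Set Ω → (ℝ → ℝ))
    (φ : Ω → ENNReal) (E : Set Ω) (x : ℝ) : ℝ :=
  sInf {y | ∃ f : SimpleFn S, f.belowOn φ E ∧ f.integral τ γ E x = y}

lemma probIntegral_eq_lcReg : probIntegral S τ γ φ E = lcReg (infIntegral S τ γ φ E) := rfl

lemma le_infIntegral {K : ℝ → ℝ} (hK : ∀ f : SimpleFn S, f.belowOn φ E → K ≤ f.integral τ γ E) :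
    K ≤ infIntegral S τ γ φ E := fun x =>
  le_csInf ⟨_, 0, SimpleFn.zero_belowOn φ E, rfl⟩ fun _ ⟨f, hf, hfx⟩ => hfx ▸ hK f hf x

lemma infIntegral_le (hτ : IsTriangleFn τ) (hmem : ∀ E ∈ S, IsDDF (γ E)) (hS : IsSetRing S)
    (hE : E ∈ S) {f : SimpleFn S} (hf : f.belowOn φ E) :
    infIntegral S τ γ φ E ≤ f.integral τ γ E := fun x =>
  csInf_le ⟨0, fun _ ⟨g, _, hgx⟩ => hgx ▸ (g.integral_isDDF hτ hmem hS hE).nonneg x⟩ ⟨f, hf, rfl⟩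

lemma infIntegral_nonneg (hτ : IsTriangleFn τ) (hmem : ∀ E ∈ S, IsDDF (γ E)) (hS : IsSetRing S)
    (hE : E ∈ S) (x : ℝ) : 0 ≤ infIntegral S τ γ φ E x :=
  le_infIntegral (K := 0) (fun f _ => (f.integral_isDDF hτ hmem hS hE).nonneg) x

lemma infIntegral_le_one (hτ : IsTriangleFn τ) (hmem : ∀ E ∈ S, IsDDF (γ E)) (hS : IsSetRing S)
    (hE : E ∈ S) (x : ℝ) : infIntegral S τ γ φ E x ≤ 1 :=
  (infIntegral_le hτ hmem hS hE (SimpleFn.zero_belowOn φ E) x).trans (isDDF_eps0.le_one x)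

lemma isDDF_probIntegral (hτ : IsTriangleFn τ) (hmem : ∀ E ∈ S, IsDDF (γ E)) (hS : IsSetRing S)
    (hE : E ∈ S) (hφ : Integrable' (S := S) τ γ φ E) :
    IsDDF (probIntegral S τ γ φ E) := by
  obtain ⟨H, hH, hHle⟩ := hφ
  refine isDDF_lcReg (infIntegral_nonneg hτ hmem hS hE) (infIntegral_le_one hτ hmem hS hE)
    (fun x hx => le_antisymm ?_ (infIntegral_nonneg hτ hmem hS hE x)) ?_
  · exact (infIntegral_le hτ hmem hS hE (SimpleFn.zero_belowOn φ E) x).trans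
      (isDDF_eps0.eq_zero_of_nonpos hx).le
  · exact tendsto_of_tendsto_of_tendsto_of_le_of_le hH.tendsto_atTop tendsto_const_nhds
      (le_infIntegral hHle) (infIntegral_le_one hτ hmem hS hE)

lemma probIntegral_le_integral (hτ : IsTriangleFn τ) (hmem : ∀ E ∈ S, IsDDF (γ E))
    (hS : IsSetRing S) (hE : E ∈ S) {f : SimpleFn S} (hf : f.belowOn φ E) :
    probIntegral S τ γ φ E ≤ f.integral τ γ E := by
  have hfE := f.integral_isDDF hτ hmem hS hE
  rw [probIntegral_eq_lcReg, ← hfE.lcReg_eq]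
  exact lcReg_le_lcReg (infIntegral_le hτ hmem hS hE hf) hfE.le_one

lemma le_probIntegral (hτ : IsTriangleFn τ) (hmem : ∀ E ∈ S, IsDDF (γ E)) (hS : IsSetRing S)
    (hE : E ∈ S) {K : ℝ → ℝ} (hK : IsDDF K)
    (hKle : ∀ f : SimpleFn S, f.belowOn φ E → K ≤ f.integral τ γ E) :
    K ≤ probIntegral S τ γ φ E := by
  rw [probIntegral_eq_lcReg, ← hK.lcReg_eq]
  exact lcReg_le_lcReg (le_infIntegral hKle) (infIntegral_le_one hτ hmem hS hE)

lemma probIntegral_empty (hτ : IsTriangleFn τ) (hmem : ∀ E ∈ S, IsDDF (γ E)) (hS : IsSetRing S)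
    (hγ : IsDecomposable S τ γ) (φ : Ω → ENNReal) :
    probIntegral S τ γ φ ∅ = eps0 := by
  refine le_antisymm ?_ (le_probIntegral hτ hmem hS hS.empty_mem isDDF_eps0 fun f _ =>
    (f.integral_empty hτ hmem hS hγ).ge)
  exact probIntegral_le_integral hτ hmem hS hS.empty_mem (SimpleFn.zero_belowOn φ ∅)

end ProbIntegral

section SibleyMetric

variable {G H K : ℝ → ℝ}

lemma dS_nonneg (G H : ℝ → ℝ) : 0 ≤ dS G H :=
  Real.sInf_nonneg fun _ hh => hh.1.le

lemma dS_le {h : ℝ} (hh : 0 < h)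
    (hGH : ∀ x ∈ Icc (0 : ℝ) (1 / h), G (x - h) - h ≤ H x ∧ H x ≤ G (x + h) + h) :
    dS G H ≤ h :=
  csInf_le ⟨0, fun _ hh' => hh'.1.le⟩ ⟨hh, hGH⟩

lemma le_add_of_dS_lt (hG : IsDDF G) (hH : IsDDF H) {y δ : ℝ} (hy : 0 ≤ y)
    (hGH : dS G H < min δ (1 / (y + 1))) : G y ≤ H (y + δ) + δ := by
  have hone : (1 : ℝ) ∈ {h : ℝ | 0 < h ∧ ∀ x ∈ Icc (0 : ℝ) (1 / h),
      G (x - h) - h ≤ H x ∧ H x ≤ G (x + h) + h} :=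
    ⟨one_pos, fun x _ => ⟨by linarith [hG.le_one (x - 1), hH.nonneg x],
      by linarith [hH.le_one x, hG.nonneg (x + 1)]⟩⟩
  obtain ⟨h, ⟨hh, hGHh⟩, hlt⟩ := exists_lt_of_csInf_lt ⟨1, hone⟩ hGH
  have hhδ : h < δ := hlt.trans_le (min_le_left _ _)
  have hhy : h * (y + 1) < 1 := (lt_div_iff₀ (by linarith)).1 (hlt.trans_le (min_le_right _ _))
  have hmem : y + h ∈ Icc (0 : ℝ) (1 / h) :=
    ⟨by linarith, (le_div_iff₀ hh).2 (by nlinarith)⟩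
  have := (hGHh (y + h) hmem).1
  rw [add_sub_cancel_right] at this
  linarith [hH.monotone (show y + h ≤ y + δ by linarith)]

lemma le_of_forall_le_of_tendsto_dS {Gn : ℕ → ℝ → ℝ} (hK : IsDDF K) (hG : IsDDF G)
    (hGn : ∀ n, IsDDF (Gn n)) (hle : ∀ n, K ≤ Gn n)
    (hlim : Tendsto (fun n => dS (Gn n) G) atTop (𝓝 0)) : K ≤ G := by
  have hshift : ∀ y, 0 ≤ y → ∀ δ, 0 < δ → K y ≤ G (y + δ) + δ := fun y hy δ hδ => by
    obtain ⟨n, hn⟩ := (hlim.eventually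
      (gt_mem_nhds (lt_min hδ (one_div_pos.2 (by linarith : (0 : ℝ) < y + 1))))).exists
    exact (hle n y).trans (le_add_of_dS_lt (hGn n) hG hy hn)
  intro x
  rw [← hK.lcReg_eq]
  refine lcReg_le fun y hyx => ?_
  rcases lt_or_ge y 0 with hy | hy
  · rw [hK.eq_zero_of_nonpos hy.le]
    exact hG.nonneg x
  refine le_of_forall_pos_le_add fun ε hε => ?_
  have hδ : 0 < min ε (x - y) := lt_min hε (by linarith)
  calc K y ≤ G (y + min ε (x - y)) + min ε (x - y) := hshift y hy _ hδ
    _ ≤ G x + ε := add_le_add (hG.monotone (by linarith [min_le_right ε (x - y)]))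
      (min_le_left _ _)

lemma dS_lcReg_le {g : ℝ → ℝ} (hG : IsDDF G) (hg0 : ∀ x, 0 ≤ g x) (hg1 : ∀ x, g x ≤ 1)
    (hgG : g ≤ G) {h : ℝ} (hh : 0 < h)
    (hgrid : ∀ k ≤ ⌈2 / (h * h)⌉₊, G (k * (h / 2)) < g (k * (h / 2)) + h) :
    dS G (lcReg g) ≤ h := by
  refine dS_le hh fun x hx => ⟨?_, ?_⟩
  · rcases le_or_gt (x - h) 0 with hxh | hxh
    · rw [hG.eq_zero_of_nonpos hxh]
      linarith [(hg0 (x - 1)).trans (le_lcReg hg1 (sub_one_lt x))]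
    set k := ⌈(x - h) / (h / 2)⌉₊
    have hk : (x - h) / (h / 2) ≤ k := Nat.le_ceil _
    have hk' : (k : ℝ) < (x - h) / (h / 2) + 1 := Nat.ceil_lt_add_one (by positivity)
    rw [div_le_iff₀ (by positivity)] at hk
    rw [← sub_lt_iff_lt_add, lt_div_iff₀ (by positivity)] at hk'
    have hkN : k ≤ ⌈2 / (h * h)⌉₊ := by
      refine Nat.ceil_mono ?_
      rw [div_le_div_iff₀ (by positivity) (by positivity)]
      have hxh1 : x * h ≤ 1 := (le_div_iff₀ hh).1 hx.2
      nlinarith [mul_le_mul_of_nonneg_left hxh1 hh.le, pow_pos hh 3]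
    calc G (x - h) - h ≤ G (k * (h / 2)) - h := by linarith [hG.monotone hk]
      _ ≤ g (k * (h / 2)) := by linarith [hgrid k hkN]
      _ ≤ lcReg g x := le_lcReg hg1 (by nlinarith)
  · calc lcReg g x ≤ G x := lcReg_le fun y hy => (hgG y).trans (hG.monotone hy.le)
      _ ≤ G (x + h) + h := by linarith [hG.monotone (show x ≤ x + h by linarith)]

end SibleyMetric

section Decomposability

variable {Ω : Type*} {S : Set (Set Ω)} {τ : (ℝ → ℝ) → (ℝ → ℝ) → (ℝ → ℝ)}
  {γ : Set Ω → (ℝ → ℝ)} {φ : Ω → ENNReal} {E F : Set Ω}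

lemma exists_belowOn_integral_lt (hτ : IsTriangleFn τ) (hmem : ∀ E ∈ S, IsDDF (γ E))
    (hS : IsSetRing S) (hγ : IsDecomposable S τ γ) (hd : IsDistributive τ) (hE : E ∈ S)
    (s : Finset ℝ) {ε : ℝ} (hε : 0 < ε) :
    ∃ f : SimpleFn S, f.belowOn φ E ∧
      ∀ z ∈ s, f.integral τ γ E z < infIntegral S τ γ φ E z + ε := by
  classical
  induction s using Finset.induction_on with
  | empty => exact ⟨0, SimpleFn.zero_belowOn φ E, by simp⟩
  | insert z s _ ih =>
    obtain ⟨f, hf, hfs⟩ := ih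
    obtain ⟨_, ⟨g, hg, rfl⟩, hgz⟩ := exists_lt_of_csInf_lt (s := {y | ∃ f : SimpleFn S,
      f.belowOn φ E ∧ f.integral τ γ E z = y}) ⟨_, 0, SimpleFn.zero_belowOn φ E, rfl⟩
      (lt_add_of_pos_right (infIntegral S τ γ φ E z) hε)
    refine ⟨SimpleFn.sup hS f g, SimpleFn.belowOn_sup hS hf hg, ?_⟩
    intro y hy
    rcases Finset.mem_insert.1 hy with rfl | hy
    · exact (SimpleFn.integral_sup_le_right hS hτ hmem hγ hd hE y).trans_lt hgz
    · exact (SimpleFn.integral_sup_le_left hS hτ hmem hγ hd hE y).trans_lt (hfs y hy)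

lemma exists_belowOn_dS_le (hτ : IsTriangleFn τ) (hmem : ∀ E ∈ S, IsDDF (γ E))
    (hS : IsSetRing S) (hγ : IsDecomposable S τ γ) (hd : IsDistributive τ) (hE : E ∈ S)
    {h : ℝ} (hh : 0 < h) :
    ∃ f : SimpleFn S, f.belowOn φ E ∧ dS (f.integral τ γ E) (probIntegral S τ γ φ E) ≤ h := by
  obtain ⟨f, hf, hgrid⟩ := exists_belowOn_integral_lt hτ hmem hS hγ hd hE
    ((Finset.range (⌈2 / (h * h)⌉₊ + 1)).image fun k : ℕ => k * (h / 2)) hh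
  refine ⟨f, hf, dS_lcReg_le (f.integral_isDDF hτ hmem hS hE)
    (infIntegral_nonneg hτ hmem hS hE) (infIntegral_le_one hτ hmem hS hE)
    (infIntegral_le hτ hmem hS hE hf) hh fun k hk => ?_⟩
  exact hgrid _ (Finset.mem_image_of_mem _ (Finset.mem_range.2 (Nat.lt_succ_of_le hk)))

lemma exists_seq_belowOn_tendsto_dS (hτ : IsTriangleFn τ) (hmem : ∀ E ∈ S, IsDDF (γ E))
    (hS : IsSetRing S) (hγ : IsDecomposable S τ γ) (hd : IsDistributive τ) (hE : E ∈ S) :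
    ∃ f : ℕ → SimpleFn S, (∀ m, (f m).belowOn φ E) ∧
      Tendsto (fun m => dS ((f m).integral τ γ E) (probIntegral S τ γ φ E)) atTop (𝓝 0) := by
  choose f hf hfd using fun m : ℕ =>
    exists_belowOn_dS_le (φ := φ) hτ hmem hS hγ hd hE (Nat.one_div_pos_of_nat (n := m))
  exact ⟨f, hf, squeeze_zero (fun m => dS_nonneg _ _) hfd tendsto_one_div_add_atTop_nhds_zero_nat⟩

lemma tau_probIntegral_le_probIntegral_union (hτ : IsTriangleFn τ)
    (hmem : ∀ E ∈ S, IsDDF (γ E)) (hS : IsSetRing S) (hγ : IsDecomposable S τ γ)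
    (hd : IsDistributive τ) (hE : E ∈ S) (hF : F ∈ S) (hEF : Disjoint E F)
    (hφE : Integrable' (S := S) τ γ φ E) (hφF : Integrable' (S := S) τ γ φ F) :
    τ (probIntegral S τ γ φ E) (probIntegral S τ γ φ F) ≤ probIntegral S τ γ φ (E ∪ F) := by
  refine le_probIntegral hτ hmem hS (hS.union_mem hE hF)
    (hτ.isDDF (isDDF_probIntegral hτ hmem hS hE hφE) (isDDF_probIntegral hτ hmem hS hF hφF))
    fun f hf => ?_
  rw [f.integral_union hτ hmem hS hγ hd hE hF hEF]
  exact hτ.mono (probIntegral_le_integral hτ hmem hS hE fun t ht => hf t (Or.inl ht))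
    (probIntegral_le_integral hτ hmem hS hF fun t ht => hf t (Or.inr ht))

lemma probIntegral_union_le_tau (hτ : IsTriangleFn τ) (hct : IsContinuousTriangle τ)
    (hmem : ∀ E ∈ S, IsDDF (γ E)) (hS : IsSetRing S) (hγ : IsDecomposable S τ γ)
    (hd : IsDistributive τ) (hE : E ∈ S) (hF : F ∈ S) (hEF : Disjoint E F)
    (hφE : Integrable' (S := S) τ γ φ E) (hφF : Integrable' (S := S) τ γ φ F)
    (hφEF : Integrable' (S := S) τ γ φ (E ∪ F)) :
    probIntegral S τ γ φ (E ∪ F) ≤ τ (probIntegral S τ γ φ E) (probIntegral S τ γ φ F) := by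
  obtain ⟨f, hf, hflim⟩ := exists_seq_belowOn_tendsto_dS (φ := φ) hτ hmem hS hγ hd hE
  obtain ⟨g, hg, hglim⟩ := exists_seq_belowOn_tendsto_dS (φ := φ) hτ hmem hS hγ hd hF
  have hfE m := (f m).integral_isDDF hτ hmem hS hE
  have hgF m := (g m).integral_isDDF hτ hmem hS hF
  have hνE := isDDF_probIntegral hτ hmem hS hE hφE
  have hνF := isDDF_probIntegral hτ hmem hS hF hφF
  refine le_of_forall_le_of_tendsto_dS (isDDF_probIntegral hτ hmem hS (hS.union_mem hE hF) hφEF)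
    (hτ.isDDF hνE hνF) (fun m => hτ.isDDF (hfE m) (hgF m)) (fun m => ?_)
    (hct _ _ _ _ hνE hνF hfE hgF hflim hglim)
  rw [← SimpleFn.integral_glue_left hS hE hF hEF hτ hmem hγ (g := g m),
    ← SimpleFn.integral_glue_right hS hE hF hEF hτ hmem hγ (f := f m),
    ← SimpleFn.integral_union hτ hmem hS hγ hd _ hE hF hEF]
  exact probIntegral_le_integral hτ hmem hS (hS.union_mem hE hF)
    (SimpleFn.belowOn_glue hS hE hF hEF (hf m) (hg m))

end Decomposability

theorem stmt19_general {Ω : Type*} (S : Set (Set Ω))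
    (hempty : (∅ : Set Ω) ∈ S)
    (hdiff : ∀ A B : Set Ω, A ∈ S → B ∈ S → A \ B ∈ S)
    (hiUnion : ∀ g : ℕ → Set Ω, (∀ n, g n ∈ S) → (⋃ n, g n) ∈ S)
    (τ : (ℝ → ℝ) → (ℝ → ℝ) → (ℝ → ℝ)) (hτ : IsTriangleFn τ)
    (hct : IsContinuousTriangle τ) (hd : IsDistributive τ)
    (γ : Set Ω → (ℝ → ℝ)) (hmem : ∀ E ∈ S, IsDDF (γ E)) (hγ : IsDecomposable S τ γ) :
    (∀ f : SimpleFn S, f.integral τ γ ∅ = eps0 ∧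
      ∀ E F : Set Ω, E ∈ S → F ∈ S → Disjoint E F →
        f.integral τ γ (E ∪ F) = τ (f.integral τ γ E) (f.integral τ γ F)) ∧
    (∀ f : Ω → ENNReal, probIntegral S τ γ f ∅ = eps0 ∧
      ∀ E F : Set Ω, E ∈ S → F ∈ S → Disjoint E F →
        Integrable' (S := S) τ γ f E → Integrable' (S := S) τ γ f F →
        Integrable' (S := S) τ γ f (E ∪ F) →
        probIntegral S τ γ f (E ∪ F) =
          τ (probIntegral S τ γ f E) (probIntegral S τ γ f F)) := by
  have hS : IsSetRing S := isSetRing_of_iUnion_mem hempty hdiff hiUnion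
  refine ⟨fun f => ⟨f.integral_empty hτ hmem hS hγ,
    fun E F hE hF hEF => f.integral_union hτ hmem hS hγ hd hE hF hEF⟩,
    fun φ => ⟨probIntegral_empty hτ hmem hS hγ φ, fun E F hE hF hEF hφE hφF hφEF => ?_⟩⟩
  exact le_antisymm (probIntegral_union_le_tau hτ hct hmem hS hγ hd hE hF hEF hφE hφF hφEF)
    (tau_probIntegral_le_probIntegral_union hτ hmem hS hγ hd hE hF hEF hφE hφF)

/-- for each (simple) γ-integrable non-negative f, the set function
ν^f_E := ∫_E f dγ is itself a τ-decomposable measure. -/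
theorem stmt19 {Ω : Type*} (S : Set (Set Ω))
    (hempty : (∅ : Set Ω) ∈ S)
    (hdiff : ∀ A B : Set Ω, A ∈ S → B ∈ S → A \ B ∈ S)
    (hiUnion : ∀ g : ℕ → Set Ω, (∀ n, g n ∈ S) → (⋃ n, g n) ∈ S)
    (τ : (ℝ → ℝ) → (ℝ → ℝ) → (ℝ → ℝ)) (hτ : IsTriangleFn τ)
    (hct : IsContinuousTriangle τ) (hd : IsDistributive τ)
    (γ : Set Ω → (ℝ → ℝ)) (hmem : ∀ E ∈ S, IsDDF (γ E)) (hγ : IsDecomposable S τ γ)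
    (hcb : ContinuousFromBelow S γ) :
    (∀ f : SimpleFn S, f.integral τ γ ∅ = eps0 ∧
      ∀ E F : Set Ω, E ∈ S → F ∈ S → Disjoint E F →
        f.integral τ γ (E ∪ F) = τ (f.integral τ γ E) (f.integral τ γ F)) ∧
    (∀ f : Ω → ENNReal, probIntegral S τ γ f ∅ = eps0 ∧
      ∀ E F : Set Ω, E ∈ S → F ∈ S → Disjoint E F →
        Integrable' (S := S) τ γ f E → Integrable' (S := S) τ γ f F →
        Integrable' (S := S) τ γ f (E ∪ F) →
        probIntegral S τ γ f (E ∪ F) =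
          τ (probIntegral S τ γ f E) (probIntegral S τ γ f F)) :=
  stmt19_general S hempty hdiff hiUnion τ hτ hct hd γ hmem hγ

end
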